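/- Assume that π₁ⁿ, π₂ⁿ ∈ Π^| satisfy π₁ⁿ ◁ π₂ⁿ for all n, and that πᵢⁿ → πᵢ as n → ∞ (i = 1,2) in the M1 topology for some π₁, π₂ ∈ Π^|. Then L°(π₁) ∩ R̄(π₂) = ∅ and L̄(π₁) ∩ R°(π₂) = ∅. -/

import Mathlib

noncomputable section

open Set Filter Topology MeasureTheory

namespace PathsPaper

/-- `tanh` extended to `EReal`, with `tanh (±∞) := ±1`. -/
def etanh (x : EReal) : ℝ :=
  if x = ⊤ then 1 else if x = ⊥ then -1 else Real.tanh x.toReal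

/-- The squeezed space `ℝ²_c = (ℝ̄ × ℝ) ∪ {(∗,−∞), (∗,+∞)}`; here `Sum.inr false`
represents `(∗,−∞)` and `Sum.inr true` represents `(∗,+∞)`. -/
abbrev Rsq := (EReal × ℝ) ⊕ Bool

/-- The embedding `Θ` of the squeezed space into `ℝ²`. -/
def theta : Rsq → ℝ × ℝ
  | Sum.inl p => (etanh p.1 / (1 + |p.2|), Real.tanh p.2)
  | Sum.inr b => (0, if b then 1 else -1)

/-- The metric `d_sqz` on the squeezed space (Euclidean distance of the `Θ`-images). -/
def dSqz (z z' : Rsq) : ℝ :=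
  Real.sqrt (((theta z).1 - (theta z').1) ^ 2 + ((theta z).2 - (theta z').2) ^ 2)

/-- A path: a closed time domain `I ⊆ ℝ` together with a left value function `l = π(·−)`
and a right value function `r = π(·+)` with values in `ℝ̄ = EReal`, such that `r` is
right-continuous along `I`, `l` is left-continuous along `I`, `l t = lim_{s↑t, s∈I} r s`
whenever `t` is a left accumulation point of `I`, and `r t = lim_{s↓t, s∈I} l s` whenever
`t` is a right accumulation point of `I`.  (The values outside `I` are normalised to `0`
so that a path is determined by its values on `I`.) -/
structure PathSp where
  I : Set ℝ
  closed_I : IsClosed I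
  l : ℝ → EReal
  r : ℝ → EReal
  l_default : ∀ t, t ∉ I → l t = 0
  r_default : ∀ t, t ∉ I → r t = 0
  right_cont : ∀ t ∈ I, Tendsto r (𝓝[I ∩ Ioi t] t) (𝓝 (r t))
  left_cont : ∀ t ∈ I, Tendsto l (𝓝[I ∩ Iio t] t) (𝓝 (l t))
  left_lim : ∀ t ∈ I, Tendsto r (𝓝[I ∩ Iio t] t) (𝓝 (l t))
  right_lim : ∀ t ∈ I, Tendsto l (𝓝[I ∩ Ioi t] t) (𝓝 (r t))

/-- The closed graph of a path, a subset of `S = ℝ̄ × ℝ`. -/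
def graph (π : PathSp) : Set (EReal × ℝ) :=
  {p | p.2 ∈ π.I ∧ (p.1 = π.l p.2 ∨ p.1 = π.r p.2)}

/-- The filled graph of a path. -/
def fgraph (π : PathSp) : Set (EReal × ℝ) :=
  {p | p.2 ∈ π.I ∧ p.1 ∈ uIcc (π.l p.2) (π.r p.2)}

/-- The strict total order `≺` on the (filled) graph of `π`: `(x,s) ≺ (y,t)` iff `s < t`,
or `s = t` and `x ≠ y` and `x` lies between `π(t−)` and `y`. -/
def gLt (π : PathSp) (p q : EReal × ℝ) : Prop :=
  p.2 < q.2 ∨ (p.2 = q.2 ∧ p.1 ≠ q.1 ∧ p.1 ∈ uIcc (π.l q.2) q.1)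

/-- The total order `⪯` on the (filled) graph of `π`. -/
def gLe (π : PathSp) (p q : EReal × ℝ) : Prop := p = q ∨ gLt π p q

/-- `π∗` (resp. `π̄∗`): a graph together with the two points at infinity of the squeezed
space. -/
def starSet (G : Set (EReal × ℝ)) : Set Rsq :=
  (Sum.inl '' G) ∪ {Sum.inr false, Sum.inr true}

/-- The order `≺` extended to the squeezed space, `(∗,−∞)` minimal, `(∗,+∞)` maximal. -/
def sLt (π : PathSp) : Rsq → Rsq → Prop
  | Sum.inl p, Sum.inl q => gLt π p q
  | Sum.inl _, Sum.inr b => b = true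
  | Sum.inr b, Sum.inl _ => b = false
  | Sum.inr b, Sum.inr b' => b = false ∧ b' = true

/-- `C` is a correspondence between `A` and `B`. -/
def IsCorr (A B : Set Rsq) (C : Set (Rsq × Rsq)) : Prop :=
  C ⊆ A ×ˢ B ∧ (∀ a ∈ A, ∃ b ∈ B, (a, b) ∈ C) ∧ (∀ b ∈ B, ∃ a ∈ A, (a, b) ∈ C)

/-- A correspondence is monotone if it contains no pair of order-violating elements. -/
def IsMono (π₁ π₂ : PathSp) (C : Set (Rsq × Rsq)) : Prop :=
  ¬ ∃ z ∈ C, ∃ z' ∈ C, sLt π₁ z.1 z'.1 ∧ sLt π₂ z'.2 z.2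

def corrSup (C : Set (Rsq × Rsq)) : ℝ := sSup ((fun z : Rsq × Rsq => dSqz z.1 z.2) '' C)

/-- The Skorohod J1 metric on the path space. -/
def dJ1 (π₁ π₂ : PathSp) : ℝ :=
  sInf {h | ∃ C, IsCorr (starSet (graph π₁)) (starSet (graph π₂)) C ∧ IsMono π₁ π₂ C ∧
    h = corrSup C}

/-- The Skorohod M1 metric on the path space. -/
def dM1 (π₁ π₂ : PathSp) : ℝ :=
  sInf {h | ∃ C, IsCorr (starSet (fgraph π₁)) (starSet (fgraph π₂)) C ∧ IsMono π₁ π₂ C ∧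
    h = corrSup C}

/-- The topology generated by the open balls of a distance function (for a metric, this
is the metric topology). -/
def ballTop {X : Type*} (d : X → X → ℝ) : TopologicalSpace X :=
  TopologicalSpace.generateFrom {U | ∃ x ε, 0 < ε ∧ U = {y | d x y < ε}}

/-- The J1 topology on the path space. -/
def J1Top : TopologicalSpace PathSp := ballTop dJ1

/-- The M1 topology on the path space. -/
def M1Top : TopologicalSpace PathSp := ballTop dM1

/-- Convergence of a sequence of paths in the J1 topology. -/
def J1Conv (πn : ℕ → PathSp) (π : PathSp) : Prop :=
  Tendsto (fun n => dJ1 (πn n) π) atTop (𝓝 0)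

/-- Convergence of a sequence of paths in the M1 topology. -/
def M1Conv (πn : ℕ → PathSp) (π : PathSp) : Prop :=
  Tendsto (fun n => dM1 (πn n) π) atTop (𝓝 0)

/-- The Hausdorff distance between two sets associated with a distance function `d`. -/
def hausDist {X : Type*} (d : X → X → ℝ) (A B : Set X) : ℝ :=
  max (sSup ((fun a => sInf ((fun b => d a b) '' B)) '' A))
      (sSup ((fun b => sInf ((fun a => d a b) '' A)) '' B))

/-- `K_+(X)`: the nonempty compact subsets of a topological space. -/
def KP {X : Type*} (τ : TopologicalSpace X) : Type _ :=
  {A : Set X // @IsCompact X τ A ∧ A.Nonempty}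

/-- The Hausdorff topology on `K_+(X)`, from a metric `d` generating `τ`. -/
def KPtop {X : Type*} (τ : TopologicalSpace X) (d : X → X → ℝ) : TopologicalSpace (KP τ) :=
  ballTop (fun A B => hausDist d A.1 B.1)

/-- Tightness of the laws of a family of random variables `A γ` with values in a space `K`
equipped with a topology `τK`: for every `ε > 0` there is a compact `C ⊆ K` whose
complement has probability at most `ε` for every `γ`. -/
def Tight {Γ : Type*} {K : Type*} (τK : TopologicalSpace K)
    {Ω : Γ → Type*} [∀ γ, MeasurableSpace (Ω γ)]
    (P : ∀ γ, Measure (Ω γ)) (A : ∀ γ, Ω γ → K) : Prop :=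
  ∀ ε : ℝ, 0 < ε → ∃ C : Set K, @IsCompact K τK C ∧
    ∀ γ, P γ {ω | A γ ω ∉ C} ≤ ENNReal.ofReal ε

/-- `Δ²_{T,δ}(π)`. -/
def Delta2 (π : PathSp) (T δ : ℝ) : Set (EReal × EReal) :=
  {p | ∃ s t : ℝ, -T ≤ s ∧ s ≤ t ∧ t ≤ T ∧ t - s ≤ δ ∧
    (p.1, s) ∈ graph π ∧ (p.2, t) ∈ graph π ∧ gLe π (p.1, s) (p.2, t)}

/-- `Δ³_{T,δ}(π)`. -/
def Delta3 (π : PathSp) (T δ : ℝ) : Set (EReal × EReal × EReal) :=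
  {p | ∃ s t u : ℝ, -T ≤ s ∧ s ≤ t ∧ t ≤ u ∧ u ≤ T ∧ u - s ≤ δ ∧
    (p.1, s) ∈ graph π ∧ (p.2.1, t) ∈ graph π ∧ (p.2.2, u) ∈ graph π ∧
    gLe π (p.1, s) (p.2.1, t) ∧ gLe π (p.2.1, t) (p.2.2, u)}

/-- `S⁺_{T,δ,ε,r}`. -/
def Splus (T δ ε r : ℝ) : Set PathSp :=
  {π | ∃ x y : EReal, (x, y) ∈ Delta2 π T δ ∧ x ≤ (r : EReal) ∧ ((r + ε : ℝ) : EReal) ≤ y}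

/-- `S⁻_{T,δ,ε,r}`. -/
def Sminus (T δ ε r : ℝ) : Set PathSp :=
  {π | ∃ x y : EReal, (x, y) ∈ Delta2 π T δ ∧ y ≤ (r : EReal) ∧ ((r + ε : ℝ) : EReal) ≤ x}

/-- `S²_{T,δ,ε,r}`. -/
def S2 (T δ ε r : ℝ) : Set PathSp := Splus T δ ε r ∪ Sminus T δ ε r

/-- `S^{+−}_{T,δ,ε,r}`. -/
def Spm (T δ ε r : ℝ) : Set PathSp :=
  {π | ∃ x y z : EReal, (x, y, z) ∈ Delta3 π T δ ∧
    x ≤ (r : EReal) ∧ z ≤ (r : EReal) ∧ ((r + ε : ℝ) : EReal) ≤ y}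

/-- `S^{−+}_{T,δ,ε,r}`. -/
def Smp (T δ ε r : ℝ) : Set PathSp :=
  {π | ∃ x y z : EReal, (x, y, z) ∈ Delta3 π T δ ∧
    y ≤ (r : EReal) ∧ ((r + ε : ℝ) : EReal) ≤ x ∧ ((r + ε : ℝ) : EReal) ≤ z}

/-- `S^{++}_{T,δ,ε,r}`. -/
def Spp (T δ ε r : ℝ) : Set PathSp :=
  {π | ∃ x y z : EReal, (x, y, z) ∈ Delta3 π T δ ∧
    x ≤ (r : EReal) ∧ ((r + ε : ℝ) : EReal) ≤ y ∧ y ≤ ((r + 2 * ε : ℝ) : EReal) ∧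
    ((r + 3 * ε : ℝ) : EReal) ≤ z}

/-- `S^{−−}_{T,δ,ε,r}`. -/
def Smm (T δ ε r : ℝ) : Set PathSp :=
  {π | ∃ x y z : EReal, (x, y, z) ∈ Delta3 π T δ ∧
    z ≤ (r : EReal) ∧ ((r + ε : ℝ) : EReal) ≤ y ∧ y ≤ ((r + 2 * ε : ℝ) : EReal) ∧
    ((r + 3 * ε : ℝ) : EReal) ≤ x}

/-- `S^J_{T,δ,ε,r}`. -/
def SJ (T δ ε r : ℝ) : Set PathSp := Spp T δ ε r ∪ Smm T δ ε r

/-- `S^M_{T,δ,ε,r}`. -/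
def SM (T δ ε r : ℝ) : Set PathSp := Spm T δ ε r ∪ Smp T δ ε r

/-- `Δ²_{T,δ}(π₁,π₂)` for a pair of paths. -/
def Delta2Pair (π₁ π₂ : PathSp) (T δ : ℝ) : Set (EReal × EReal × EReal × EReal) :=
  {q | ∃ s₁ t₁ s₂ t₂ : ℝ,
    -T ≤ s₁ ∧ s₁ ≤ t₁ ∧ t₁ ≤ T ∧ -T ≤ s₂ ∧ s₂ ≤ t₂ ∧ t₂ ≤ T ∧
    (q.1, s₁) ∈ graph π₁ ∧ (q.2.1, t₁) ∈ graph π₁ ∧ gLe π₁ (q.1, s₁) (q.2.1, t₁) ∧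
    (q.2.2.1, s₂) ∈ graph π₂ ∧ (q.2.2.2, t₂) ∈ graph π₂ ∧
    gLe π₂ (q.2.2.1, s₂) (q.2.2.2, t₂) ∧
    max t₁ t₂ - min s₁ s₂ ≤ δ}

/-- `C^M_{T,δ,ε,r}`. -/
def CM (T δ ε r : ℝ) : Set (PathSp × PathSp) :=
  {pp | ∃ x₁ y₁ x₂ y₂ : EReal, (x₁, y₁, x₂, y₂) ∈ Delta2Pair pp.1 pp.2 T δ ∧
    x₁ ≤ (r : EReal) ∧ y₂ ≤ (r : EReal) ∧
    ((r + ε : ℝ) : EReal) ≤ y₁ ∧ ((r + ε : ℝ) : EReal) ≤ x₂}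

/-- `φ(x) = x/√(1+x²)` extended to `ℝ̄`. -/
def phiR (x : EReal) : ℝ :=
  if x = ⊤ then 1 else if x = ⊥ then -1 else x.toReal / Real.sqrt (1 + x.toReal ^ 2)

/-- The metric `d_ℝ̄` on `ℝ̄`. -/
def dR (x y : EReal) : ℝ := |phiR x - phiR y|

/-- The modulus of continuity `m_{T,δ}(π)`. -/
def modC (π : PathSp) (T δ : ℝ) : ℝ :=
  sSup {h | ∃ x y : EReal, (x, y) ∈ Delta2 π T δ ∧ h = dR x y}

/-- The modulus `m^J_{T,δ}(π)`. -/
def modJ (π : PathSp) (T δ : ℝ) : ℝ :=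
  sSup {h | ∃ x y z : EReal, (x, y, z) ∈ Delta3 π T δ ∧ h = min (dR y x) (dR y z)}

/-- The modulus `m^M_{T,δ}(π)`. -/
def modM (π : PathSp) (T δ : ℝ) : ℝ :=
  sSup {h | ∃ x y z : EReal, (x, y, z) ∈ Delta3 π T δ ∧
    h = sInf ((fun w => dR y w) '' uIcc x z)}

/-- `T²_{T,δ,η}`. -/
def T2set (T δ η : ℝ) : Set PathSp :=
  {π | ∃ x y : EReal, (x, y) ∈ Delta2 π T δ ∧ dR x y > η}

/-- `T⁺_{T,δ,η}`. -/
def Tplus (T δ η : ℝ) : Set PathSp :=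
  {π | ∃ x y : EReal, (x, y) ∈ Delta2 π T δ ∧ x < y ∧ dR x y > η}

/-- `T⁻_{T,δ,η}`. -/
def Tminus (T δ η : ℝ) : Set PathSp :=
  {π | ∃ x y : EReal, (x, y) ∈ Delta2 π T δ ∧ y < x ∧ dR x y > η}

/-- `T^{++}_{T,δ,η}`. -/
def Tpp (T δ η : ℝ) : Set PathSp :=
  {π | ∃ x y z : EReal, (x, y, z) ∈ Delta3 π T δ ∧ x < y ∧ y < z ∧
    dR x y > η ∧ dR y z > η}

/-- `T^{+−}_{T,δ,η}`. -/
def Tpm (T δ η : ℝ) : Set PathSp :=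
  {π | ∃ x y z : EReal, (x, y, z) ∈ Delta3 π T δ ∧ x < y ∧ z < y ∧
    dR x y > η ∧ dR y z > η}

/-- `T^{−+}_{T,δ,η}`. -/
def Tmp (T δ η : ℝ) : Set PathSp :=
  {π | ∃ x y z : EReal, (x, y, z) ∈ Delta3 π T δ ∧ y < x ∧ y < z ∧
    dR x y > η ∧ dR y z > η}

/-- `T^{−−}_{T,δ,η}`. -/
def Tmm (T δ η : ℝ) : Set PathSp :=
  {π | ∃ x y z : EReal, (x, y, z) ∈ Delta3 π T δ ∧ y < x ∧ z < y ∧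
    dR x y > η ∧ dR y z > η}

/-- `T^J_{T,δ,η}`. -/
def TJ (T δ η : ℝ) : Set PathSp := Tpp T δ η ∪ Tmm T δ η

/-- `T^M_{T,δ,η}`. -/
def TM (T δ η : ℝ) : Set PathSp := Tpm T δ η ∪ Tmp T δ η

/-- A continuous path. -/
def IsContP (π : PathSp) : Prop := ∀ t ∈ π.I, π.l t = π.r t

/-- The space `Π_c` of continuous paths. -/
def PathC : Type := {π : PathSp // IsContP π}

/-- The (J1 = M1) metric on `Π_c`. -/
def dC (π₁ π₂ : PathC) : ℝ := dJ1 π₁.1 π₂.1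

/-- The topology on `Π_c`. -/
def CTop : TopologicalSpace PathC := ballTop dC

/-- A connected path: the domain is an interval. -/
def IsConn (π : PathSp) : Prop := π.I.OrdConnected

/-- A bi-infinite path: the domain is all of `ℝ`. -/
def IsBiInf (π : PathSp) : Prop := π.I = univ

/-- `π'` extends `π`. -/
def ExtendsP (π' π : PathSp) : Prop := fgraph π ⊆ fgraph π'

/-- The relation `π₁ ◁ π₂`. -/
def OrdBelow (π₁ π₂ : PathSp) : Prop :=
  ∃ π₁' π₂' : PathSp, IsBiInf π₁' ∧ IsBiInf π₂' ∧ ExtendsP π₁' π₁ ∧ ExtendsP π₂' π₂ ∧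
    ∀ t : ℝ, π₁'.l t ≤ π₂'.l t ∧ π₁'.r t ≤ π₂'.r t

/-- A noncrossing set of paths. -/
def Noncrossing (A : Set PathSp) : Prop :=
  ∀ π₁ ∈ A, ∀ π₂ ∈ A, OrdBelow π₁ π₂ ∨ OrdBelow π₂ π₁

/-- `π₁` crosses `π₂`. -/
def Crosses (π₁ π₂ : PathSp) : Prop := ¬ OrdBelow π₁ π₂ ∧ ¬ OrdBelow π₂ π₁

/-- `π₁` collides with `π₂` at time `t`: at time `t` the two paths jump over some
interval in opposite directions. -/
def CollidesAt (π₁ π₂ : PathSp) (t : ℝ) : Prop :=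
  t ∈ π₁.I ∧ t ∈ π₂.I ∧
  ((π₁.r t < π₁.l t ∧ π₁.r t < π₂.r t ∧ π₂.l t < π₁.l t ∧ π₂.l t < π₂.r t) ∨
   (π₁.l t < π₁.r t ∧ π₁.l t < π₂.l t ∧ π₂.r t < π₁.r t ∧ π₂.r t < π₂.l t))

/-- `∂I`: the finite boundary points of the domain of `π`. -/
def bdryI (π : PathSp) : Set ℝ := π.I \ interior π.I

/-- `t` is the (finite) minimum of `I`. -/
def IsMinOf (I : Set ℝ) (t : ℝ) : Prop := t ∈ I ∧ ∀ s ∈ I, t ≤ s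

/-- `t` is the (finite) maximum of `I`. -/
def IsMaxOf (I : Set ℝ) (t : ℝ) : Prop := t ∈ I ∧ ∀ s ∈ I, s ≤ t

/-- `∂⁻I`, the set of finite lower boundary points. -/
def bdryMinus (I : Set ℝ) : Set ℝ := {t | IsMinOf I t}

/-- `∂⁺I`, the set of finite upper boundary points. -/
def bdryPlus (I : Set ℝ) : Set ℝ := {t | IsMaxOf I t}

/-- Evaluation of a path at a point `t±` of the split real line; `(t, false)` stands
for `t−` and `(t, true)` for `t+`. -/
def pev (π : PathSp) (tb : ℝ × Bool) : EReal := if tb.2 then π.r tb.1 else π.l tb.1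

/-- `I^𝔰_π`: points `t±` with `t ∈ I_π`, excluding `s−` and `u+` where `s, u` are the
initial and final times. -/
def Isplit (π : PathSp) : Set (ℝ × Bool) :=
  {tb | tb.1 ∈ π.I ∧ ¬ (tb.2 = false ∧ IsMinOf π.I tb.1) ∧ ¬ (tb.2 = true ∧ IsMaxOf π.I tb.1)}

/-- `I^l_π`. -/
def Il (π : PathSp) : Set (ℝ × Bool) :=
  Isplit π ∪ {tb | tb.2 = false ∧ IsMinOf π.I tb.1 ∧ π.r tb.1 < π.l tb.1}
    ∪ {tb | tb.2 = true ∧ IsMaxOf π.I tb.1 ∧ π.l tb.1 < π.r tb.1}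

/-- `I^r_π`. -/
def Ir (π : PathSp) : Set (ℝ × Bool) :=
  Isplit π ∪ {tb | tb.2 = false ∧ IsMinOf π.I tb.1 ∧ π.l tb.1 < π.r tb.1}
    ∪ {tb | tb.2 = true ∧ IsMaxOf π.I tb.1 ∧ π.r tb.1 < π.l tb.1}

/-- `L(π)`. -/
def Lset (π : PathSp) : Set (EReal × ℝ × Bool) := {p | p.2 ∈ Il π ∧ p.1 < pev π p.2}

/-- `R(π)`. -/
def Rset (π : PathSp) : Set (EReal × ℝ × Bool) := {p | p.2 ∈ Ir π ∧ pev π p.2 < p.1}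

/-- `L°(π)`. -/
def Lo (π : PathSp) : Set (EReal × ℝ) :=
  {p | p.2 ∈ interior π.I ∧ p.1 < min (π.l p.2) (π.r p.2)}

/-- `L̄(π)`. -/
def Lbar (π : PathSp) : Set (EReal × ℝ) :=
  {p | p.2 ∈ π.I ∧ p.1 ≤ max (π.l p.2) (π.r p.2)}

/-- `L^c(π) = S ∖ L°(π)`. -/
def Lc (π : PathSp) : Set (EReal × ℝ) := (Lo π)ᶜ

/-- `R°(π)`. -/
def Ro (π : PathSp) : Set (EReal × ℝ) :=
  {p | p.2 ∈ interior π.I ∧ max (π.l p.2) (π.r p.2) < p.1}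

/-- `R̄(π)`. -/
def Rbar (π : PathSp) : Set (EReal × ℝ) :=
  {p | p.2 ∈ π.I ∧ min (π.l p.2) (π.r p.2) ≤ p.1}

/-- `π^⟨2⟩`: the ordered pairs of points of the closed graph. -/
def gr2 (π : PathSp) : Set ((EReal × ℝ) × (EReal × ℝ)) :=
  {q | q.1 ∈ graph π ∧ q.2 ∈ graph π ∧ gLe π q.1 q.2}

/-- `π̄^⟨2⟩`: the ordered pairs of points of the filled graph. -/
def fgr2 (π : PathSp) : Set ((EReal × ℝ) × (EReal × ℝ)) :=
  {q | q.1 ∈ fgraph π ∧ q.2 ∈ fgraph π ∧ gLe π q.1 q.2}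

/-- Convergence `A_n → B` of closed subsets of `Y` in the local Hausdorff topology,
expressed through its standard sequential characterisation (Lemma 2.2 of the paper,
which also shows this is independent of the choice of metric): every point of `B` is a
limit of points of `A_{n,∞} = A_n ∪ {∞}` in the one-point compactification, and every
cluster point in `Y` of such a sequence lies in `B`. -/
def LHConv {Y : Type*} [TopologicalSpace Y] (A : ℕ → Set Y) (B : Set Y) : Prop :=
  (∀ x ∈ B, ∃ u : ℕ → OnePoint Y,
    (∀ n, u n ∈ insert OnePoint.infty ((fun y : Y => (y : OnePoint Y)) '' A n)) ∧
      Tendsto u atTop (𝓝 (x : OnePoint Y))) ∧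
  (∀ x : Y, (∃ u : ℕ → OnePoint Y,
    (∀ n, u n ∈ insert OnePoint.infty ((fun y : Y => (y : OnePoint Y)) '' A n)) ∧
      MapClusterPt (x : OnePoint Y) atTop u) → x ∈ B)

/-- Convergence of compact sets of paths in the Hausdorff "metric" associated to `dM1`. -/
def HausConvM1 (A : ℕ → Set PathSp) (B : Set PathSp) : Prop :=
  Tendsto (fun n => hausDist dM1 (A n) B) atTop (𝓝 0)

/-! Suppose `(x, t) ∈ L°(π₁) ∩ R̄(π₂)` and pick `x < c < c₂ < π₁(t±)`. On a time window around
`t` the path `π₁` stays above `c₂`; by M1 convergence, for large `n` the connected path `π₁ⁿ` is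
defined on a slightly smaller window and stays above `c` there, while `π₂ⁿ` has a point `(xₙ, tₙ)`
below `c` with `tₙ` inside that window. A bi-infinite extension `π₁'` of `π₁ⁿ` is then `≥ c` at
`tₙ±`: near `tₙ` the values of `π₁ⁿ` lie between `π₁'(s−)` and `π₁'(s+)`, which tend to `π₁'(tₙ−)`
as `s ↑ tₙ` and to `π₁'(tₙ+)` as `s ↓ tₙ`. So the extension `π₂' ≥ π₁'` of `π₂ⁿ` cannot pass
through `(xₙ, tₙ)`. The second claim is the first one for the reflected paths `-π₂ ◁ -π₁`. -/

lemma tanh_strictMono : StrictMono Real.tanh := by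
  intro a b hab
  by_contra! h
  have := Real.artanh_le_artanh (Real.neg_one_lt_tanh b) (Real.tanh_lt_one a) h
  rw [Real.artanh_tanh, Real.artanh_tanh] at this
  linarith

lemma continuous_tanh : Continuous Real.tanh := by
  have : Real.tanh = fun x => Real.sinh x / Real.cosh x := funext Real.tanh_eq_sinh_div_cosh
  rw [this]
  exact Real.continuous_sinh.div Real.continuous_cosh fun x => (Real.cosh_pos x).ne'

lemma abs_tanh_le_tanh_of_abs_le {s T : ℝ} (h : |s| ≤ T) : |Real.tanh s| ≤ Real.tanh T := by
  have hT := (abs_le.1 h)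
  rw [abs_le, ← Real.tanh_neg]
  exact ⟨tanh_strictMono.monotone hT.1, tanh_strictMono.monotone hT.2⟩

lemma exists_pos_abs_sub_lt_of_abs_tanh_sub_lt (T : ℝ) {η : ℝ} (hη : 0 < η) :
    ∃ ε > 0, ∀ u s, |s| ≤ T → |Real.tanh u - Real.tanh s| < ε → |u - s| < η := by
  set f : ℝ → ℝ := fun s =>
    min (Real.tanh (s + η) - Real.tanh s) (Real.tanh s - Real.tanh (s - η))
  have hf : Continuous f :=
    ((continuous_tanh.comp (continuous_add_const η)).sub continuous_tanh).min
      (continuous_tanh.sub (continuous_tanh.comp (continuous_sub_right η)))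
  obtain ⟨s₀, -, hs₀⟩ := isCompact_Icc.exists_isMinOn (nonempty_Icc.2 (neg_le_self (abs_nonneg T)))
    hf.continuousOn
  refine ⟨f s₀, lt_min (sub_pos.2 (tanh_strictMono (by linarith)))
    (sub_pos.2 (tanh_strictMono (by linarith))), fun u s hs h => ?_⟩
  have hfs : f s₀ ≤ f s := hs₀ (abs_le.1 (hs.trans (le_abs_self T)))
  have hmin := hfs.trans (min_le_left _ _)
  have hmin' := hfs.trans (min_le_right _ _)
  rw [abs_lt] at h ⊢
  constructor <;> by_contra! h'
  · linarith [tanh_strictMono.monotone (show u ≤ s - η by linarith)]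
  · linarith [tanh_strictMono.monotone (show s + η ≤ u by linarith)]

@[simp] lemma etanh_coe (x : ℝ) : etanh x = Real.tanh x := by simp [etanh]

lemma etanh_neg (x : EReal) : etanh (-x) = -etanh x := by
  induction x using EReal.rec <;> simp [etanh, ← EReal.coe_neg, Real.tanh_neg]

lemma etanh_strictMono : StrictMono etanh := by
  intro x y h
  induction x using EReal.rec with
  | bot =>
    induction y using EReal.rec with
    | bot => simp at h
    | coe b => simpa [etanh] using Real.neg_one_lt_tanh b
    | top => simp [etanh]
  | coe a =>
    induction y using EReal.rec with
    | bot => simp at h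
    | coe b => simpa using tanh_strictMono (EReal.coe_lt_coe_iff.1 h)
    | top => simpa [etanh] using Real.tanh_lt_one a
  | top => simp at h

lemma abs_etanh_le_one (x : EReal) : |etanh x| ≤ 1 := by
  induction x using EReal.rec <;> simp [etanh, (Real.abs_tanh_lt_one _).le]

lemma abs_etanh_sub_etanh_le (v w : EReal) (u s : ℝ) :
    |etanh v - etanh w| ≤ (1 + |s|) * |etanh v / (1 + |u|) - etanh w / (1 + |s|)| + |u - s| := by
  have hu : (0 : ℝ) < 1 + |u| := by positivity
  have hs : (0 : ℝ) < 1 + |s| := by positivity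
  set a := etanh v / (1 + |u|)
  set b := etanh w / (1 + |s|)
  have ha : |a| ≤ 1 := by
    rw [abs_div, abs_of_pos hu, div_le_one hu]
    linarith [abs_etanh_le_one v, abs_nonneg u]
  have key : etanh v - etanh w = (1 + |s|) * (a - b) + (|u| - |s|) * a := by
    simp only [a, b]; field_simp; ring
  calc |etanh v - etanh w| ≤ |(1 + |s|) * (a - b)| + |(|u| - |s|) * a| := key ▸ abs_add_le _ _
    _ ≤ (1 + |s|) * |a - b| + |u - s| * 1 := by
      rw [abs_mul, abs_mul, abs_of_pos hs]
      exact add_le_add le_rfl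
        (mul_le_mul (abs_abs_sub_abs_le_abs_sub u s) ha (abs_nonneg _) (abs_nonneg _))
    _ = _ := by ring

lemma dSqz_comm (z z' : Rsq) : dSqz z z' = dSqz z' z := by
  unfold dSqz; ring_nf

lemma abs_fst_le_dSqz (z z' : Rsq) : |(theta z).1 - (theta z').1| ≤ dSqz z z' :=
  Real.abs_le_sqrt (le_add_of_nonneg_right (sq_nonneg _))

lemma abs_snd_le_dSqz (z z' : Rsq) : |(theta z).2 - (theta z').2| ≤ dSqz z z' :=
  Real.abs_le_sqrt (le_add_of_nonneg_left (sq_nonneg _))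

lemma abs_theta_le_one (z : Rsq) : |(theta z).1| ≤ 1 ∧ |(theta z).2| ≤ 1 := by
  rcases z with ⟨x, t⟩ | b
  · have ht : (0 : ℝ) < 1 + |t| := by positivity
    refine ⟨?_, (Real.abs_tanh_lt_one t).le⟩
    simp only [theta, abs_div, abs_of_pos ht, div_le_one ht]
    linarith [abs_etanh_le_one x, abs_nonneg t]
  · cases b <;> simp [theta]

lemma dSqz_le_four (z z' : Rsq) : dSqz z z' ≤ 4 := by
  obtain ⟨h₁, h₂⟩ := abs_theta_le_one z
  obtain ⟨h₁', h₂'⟩ := abs_theta_le_one z'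
  rw [abs_le] at h₁ h₂ h₁' h₂'
  refine Real.sqrt_le_iff.2 ⟨by norm_num, ?_⟩
  nlinarith

lemma one_sub_abs_tanh_le_dSqz (b : Bool) (w : EReal) (s : ℝ) :
    1 - |Real.tanh s| ≤ dSqz (Sum.inr b) (Sum.inl (w, s)) := by
  refine le_trans ?_ (abs_snd_le_dSqz _ _)
  cases b
  · simpa [theta] using abs_sub_abs_le_abs_sub (-1 : ℝ) (Real.tanh s)
  · simpa [theta] using abs_sub_abs_le_abs_sub (1 : ℝ) (Real.tanh s)

lemma exists_pos_near_of_dSqz_lt (T : ℝ) {η : ℝ} (hη : 0 < η) :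
    ∃ ε > 0, ∀ z w s, |s| ≤ T → dSqz z (Sum.inl (w, s)) < ε →
      ∃ v u, z = Sum.inl (v, u) ∧ |u - s| < η ∧ |etanh v - etanh w| < η := by
  obtain ⟨ε₀, hε₀, htime⟩ := exists_pos_abs_sub_lt_of_abs_tanh_sub_lt T (half_pos hη)
  have hT : 0 < 1 - Real.tanh |T| := sub_pos.2 (Real.tanh_lt_one _)
  refine ⟨min (min ε₀ (1 - Real.tanh |T|)) (η / (2 * (1 + |T|))), by positivity, ?_⟩
  intro z w s hs hd
  have hε := lt_min_iff.1 (lt_min_iff.1 hd).1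
  have hd₂ := (lt_min_iff.1 hd).2
  have hs' : |Real.tanh s| ≤ Real.tanh |T| := abs_tanh_le_tanh_of_abs_le (hs.trans (le_abs_self T))
  rcases z with ⟨v, u⟩ | b
  · have hu : |u - s| < η / 2 :=
      htime u s hs ((abs_snd_le_dSqz _ _).trans_lt hε.1)
    refine ⟨v, u, rfl, by linarith, ?_⟩
    have hfst := (abs_fst_le_dSqz (Sum.inl (v, u)) (Sum.inl (w, s))).trans_lt hd₂
    have hT' : (1 + |s|) * (η / (2 * (1 + |T|))) ≤ η / 2 := by
      rw [mul_div_assoc', div_le_div_iff₀ (by positivity) (by positivity)]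
      nlinarith [le_abs_self T, abs_nonneg s]
    calc |etanh v - etanh w|
        ≤ (1 + |s|) * |etanh v / (1 + |u|) - etanh w / (1 + |s|)| + |u - s| :=
          abs_etanh_sub_etanh_le v w u s
      _ < (1 + |s|) * (η / (2 * (1 + |T|))) + η / 2 := by
          gcongr
          exact hfst
      _ ≤ η := by linarith
  · linarith [one_sub_abs_tanh_le_dSqz b w s, hε.2]

def trivialCorr (A B : Set Rsq) : Set (Rsq × Rsq) :=
  (A ×ˢ {Sum.inr true}) ∪ ({Sum.inr false} ×ˢ B)

lemma inr_mem_starSet (G : Set (EReal × ℝ)) (b : Bool) : Sum.inr b ∈ starSet G := by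
  cases b <;> simp [starSet]

lemma isCorr_trivialCorr (G G' : Set (EReal × ℝ)) :
    IsCorr (starSet G) (starSet G') (trivialCorr (starSet G) (starSet G')) := by
  refine ⟨?_, fun a ha => ⟨_, inr_mem_starSet _ true, Or.inl ⟨ha, rfl⟩⟩,
    fun b hb => ⟨_, inr_mem_starSet _ false, Or.inr ⟨rfl, hb⟩⟩⟩
  rintro ⟨z, z'⟩ (⟨hz, rfl : z' = _⟩ | ⟨rfl : z = _, hz'⟩)
  · exact ⟨hz, inr_mem_starSet _ _⟩
  · exact ⟨inr_mem_starSet _ _, hz'⟩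

lemma isMono_trivialCorr (π₁ π₂ : PathSp) (A B : Set Rsq) :
    IsMono π₁ π₂ (trivialCorr A B) := by
  rintro ⟨⟨z₁, z₂⟩, hz, ⟨z₁', z₂'⟩, hz', h₁, h₂⟩
  rcases hz with ⟨-, rfl : z₂ = _⟩ | ⟨rfl : z₁ = _, -⟩ <;>
    rcases hz' with ⟨-, rfl : z₂' = _⟩ | ⟨rfl : z₁' = _, -⟩
  · simp [sLt] at h₂
  · cases z₁ <;> simp [sLt] at h₁
  · cases z₂ <;> simp [sLt] at h₂
  · simp [sLt] at h₁

-- Without this, `sInf ∅ = 0` would make `dM1 π π' < ε` carry no information.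
lemma dM1_set_nonempty (π π' : PathSp) :
    {h | ∃ C, IsCorr (starSet (fgraph π)) (starSet (fgraph π')) C ∧ IsMono π π' C ∧
      h = corrSup C}.Nonempty :=
  ⟨_, _, isCorr_trivialCorr _ _, isMono_trivialCorr _ _ _ _, rfl⟩

lemma corrSup_nonneg (C : Set (Rsq × Rsq)) : 0 ≤ corrSup C :=
  Real.sSup_nonneg (by rintro _ ⟨z, -, rfl⟩; exact Real.sqrt_nonneg _)

lemma dSqz_le_corrSup {C : Set (Rsq × Rsq)} {z : Rsq × Rsq} (hz : z ∈ C) :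
    dSqz z.1 z.2 ≤ corrSup C :=
  le_csSup ⟨4, by rintro _ ⟨w, -, rfl⟩; exact dSqz_le_four _ _⟩ ⟨z, hz, rfl⟩

lemma dM1_nonneg (π π' : PathSp) : 0 ≤ dM1 π π' :=
  Real.sInf_nonneg (by rintro _ ⟨C, -, -, rfl⟩; exact corrSup_nonneg C)

lemma exists_corr_of_dM1_lt {π π' : PathSp} {ε : ℝ} (h : dM1 π π' < ε) :
    ∃ C, IsCorr (starSet (fgraph π)) (starSet (fgraph π')) C ∧ ∀ z ∈ C, dSqz z.1 z.2 < ε := by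
  obtain ⟨_, ⟨C, hC, -, rfl⟩, hCε⟩ :=
    (csInf_lt_iff ⟨0, by rintro _ ⟨C, -, -, rfl⟩; exact corrSup_nonneg C⟩
      (dM1_set_nonempty π π')).1 h
  exact ⟨C, hC, fun z hz => (dSqz_le_corrSup hz).trans_lt hCε⟩

namespace M1Conv

variable {πn : ℕ → PathSp} {π : PathSp}

lemma eventually_exists_near (h : M1Conv πn π) {v : EReal} {u : ℝ} (hvu : (v, u) ∈ fgraph π)
    {η : ℝ} (hη : 0 < η) :
    ∀ᶠ n in atTop, ∃ w s, (w, s) ∈ fgraph (πn n) ∧ |s - u| < η ∧ |etanh w - etanh v| < η := by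
  obtain ⟨ε, hε, hnear⟩ := exists_pos_near_of_dSqz_lt |u| hη
  filter_upwards [h.eventually_lt_const hε] with n hn
  obtain ⟨C, hC, hCε⟩ := exists_corr_of_dM1_lt hn
  obtain ⟨z, hz, hzC⟩ := hC.2.2 (Sum.inl (v, u)) (Or.inl ⟨_, hvu, rfl⟩)
  obtain ⟨w, s, rfl, hs, hw⟩ := hnear z v u le_rfl (hCε _ hzC)
  exact ⟨w, s, by simpa [starSet] using hz, hs, hw⟩

lemma eventually_forall_exists_near (h : M1Conv πn π) (T : ℝ) {η : ℝ} (hη : 0 < η) :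
    ∀ᶠ n in atTop, ∀ w s, (w, s) ∈ fgraph (πn n) → |s| ≤ T →
      ∃ v u, (v, u) ∈ fgraph π ∧ |s - u| < η ∧ |etanh w - etanh v| < η := by
  obtain ⟨ε, hε, hnear⟩ := exists_pos_near_of_dSqz_lt T hη
  filter_upwards [h.eventually_lt_const hε] with n hn w s hws hs
  obtain ⟨C, hC, hCε⟩ := exists_corr_of_dM1_lt hn
  obtain ⟨z, hz, hzC⟩ := hC.2.1 (Sum.inl (w, s)) (Or.inl ⟨_, hws, rfl⟩)
  obtain ⟨v, u, rfl, hu, hv⟩ := hnear z w s hs (dSqz_comm _ _ ▸ hCε _ hzC)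
  exact ⟨v, u, by simpa [starSet] using hz, abs_sub_comm u s ▸ hu, abs_sub_comm (etanh v) _ ▸ hv⟩

end M1Conv

namespace PathSp

variable {π : PathSp} {t : ℝ} {U : Set EReal}

lemma l_mem_fgraph (ht : t ∈ π.I) : (π.l t, t) ∈ fgraph π := ⟨ht, left_mem_uIcc⟩

lemma eventually_nhdsLT_mem (ht : t ∈ π.I) (hU : U ∈ 𝓝 (π.l t)) :
    ∀ᶠ s in 𝓝[π.I ∩ Iio t] t, π.l s ∈ U ∧ π.r s ∈ U :=
  ((π.left_cont t ht).eventually_mem hU).and ((π.left_lim t ht).eventually_mem hU)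

lemma eventually_nhdsGT_mem (ht : t ∈ π.I) (hU : U ∈ 𝓝 (π.r t)) :
    ∀ᶠ s in 𝓝[π.I ∩ Ioi t] t, π.l s ∈ U ∧ π.r s ∈ U :=
  ((π.right_lim t ht).eventually_mem hU).and ((π.right_cont t ht).eventually_mem hU)

lemma eventually_nhds_mem (ht : t ∈ interior π.I) (hl : U ∈ 𝓝 (π.l t)) (hr : U ∈ 𝓝 (π.r t)) :
    ∀ᶠ s in 𝓝 t, s ∈ π.I ∧ π.l s ∈ U ∧ π.r s ∈ U := by
  have hI : π.I ∈ 𝓝 t := mem_interior_iff_mem_nhds.1 ht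
  have htI : t ∈ π.I := mem_of_mem_nhds hI
  rw [← nhdsNE_sup_pure, ← nhdsLT_sup_nhdsGT]
  simp only [eventually_sup, eventually_pure]
  refine ⟨⟨?_, ?_⟩, htI, mem_of_mem_nhds hl, mem_of_mem_nhds hr⟩
  · rw [← nhdsWithin_inter_of_mem (mem_nhdsWithin_of_mem_nhds hI)]
    filter_upwards [eventually_nhdsLT_mem htI hl, self_mem_nhdsWithin] with s hs hsI
      using ⟨hsI.1, hs⟩
  · rw [← nhdsWithin_inter_of_mem (mem_nhdsWithin_of_mem_nhds hI)]
    filter_upwards [eventually_nhdsGT_mem htI hr, self_mem_nhdsWithin] with s hs hsI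
      using ⟨hsI.1, hs⟩

lemma le_of_extends_of_eventually_lt {π' : PathSp} (hbi : IsBiInf π') (hext : ExtendsP π' π)
    {c : EReal} (h : ∀ᶠ s in 𝓝 t, s ∈ π.I ∧ c < π.l s) : c ≤ π'.l t ∧ c ≤ π'.r t := by
  have hI : π'.I = univ := hbi
  have ht : t ∈ π'.I := hI ▸ mem_univ t
  have hfalse : ∀ s, s ∈ π.I ∧ c < π.l s → ¬ (π'.l s ∈ Iio c ∧ π'.r s ∈ Iio c) :=
    fun s hs hs' => hs.2.not_gt (ordConnected_Iio.uIcc_subset hs'.1 hs'.2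
      (hext (l_mem_fgraph hs.1)).2)
  constructor <;> by_contra! hlt
  · have hev := eventually_nhdsLT_mem ht (Iio_mem_nhds hlt)
    rw [hI, univ_inter] at hev
    obtain ⟨s, hs, hs'⟩ := ((h.filter_mono nhdsWithin_le_nhds).and hev).exists
    exact hfalse s hs hs'
  · have hev := eventually_nhdsGT_mem ht (Iio_mem_nhds hlt)
    rw [hI, univ_inter] at hev
    obtain ⟨s, hs, hs'⟩ := ((h.filter_mono nhdsWithin_le_nhds).and hev).exists
    exact hfalse s hs hs'

end PathSp

lemma M1Conv.eventually_gt_on_Icc {πn : ℕ → PathSp} {π : PathSp} (h : M1Conv πn π)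
    (hconn : ∀ n, IsConn (πn n)) {a a' b' b : ℝ} (ha : a < a') (hab : a' ≤ b') (hb : b' < b)
    {c c₂ : EReal} (hc : c < c₂) (hπ : ∀ u ∈ Ioo a b, u ∈ π.I ∧ c₂ < π.l u ∧ c₂ < π.r u) :
    ∀ᶠ n in atTop, ∀ s ∈ Icc a' b', s ∈ (πn n).I ∧ c < (πn n).l s := by
  have hgt : ∀ u ∈ Ioo a b, ∀ v, (v, u) ∈ fgraph π → c₂ < v := fun u hu v hv =>
    ordConnected_Ioi.uIcc_subset (hπ u hu).2.1 (hπ u hu).2.2 hv.2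
  set η := min (min ((a' - a) / 2) ((b - b') / 2)) (etanh c₂ - etanh c)
  have hη : 0 < η :=
    lt_min (lt_min (by linarith) (by linarith)) (sub_pos.2 (etanh_strictMono hc))
  have hη₁ : η ≤ (a' - a) / 2 := (min_le_left _ _).trans (min_le_left _ _)
  have hη₂ : η ≤ (b - b') / 2 := (min_le_left _ _).trans (min_le_right _ _)
  have hη₃ : η ≤ etanh c₂ - etanh c := min_le_right _ _
  have hA : (a + a') / 2 ∈ Ioo a b := ⟨by linarith, by linarith⟩
  have hB : (b' + b) / 2 ∈ Ioo a b := ⟨by linarith, by linarith⟩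
  -- Points of `πⁿ` near the two anchors bracket `[a', b']`, which is then in `I_{πⁿ}`.
  filter_upwards [h.eventually_exists_near (PathSp.l_mem_fgraph (hπ _ hA).1) hη,
    h.eventually_exists_near (PathSp.l_mem_fgraph (hπ _ hB).1) hη,
    h.eventually_forall_exists_near (max |a'| |b'|) hη] with n hnearA hnearB hnear s hs
  obtain ⟨_, sa, hsa, hsa', -⟩ := hnearA
  obtain ⟨_, sb, hsb, hsb', -⟩ := hnearB
  rw [abs_lt] at hsa' hsb'
  have hsI : s ∈ (πn n).I := (hconn n).out hsa.1 hsb.1 ⟨by linarith [hs.1], by linarith [hs.2]⟩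
  refine ⟨hsI, ?_⟩
  have hsT : |s| ≤ max |a'| |b'| := abs_le.2
    ⟨by linarith [hs.1, neg_abs_le a', le_max_left |a'| |b'|],
      by linarith [hs.2, le_abs_self b', le_max_right |a'| |b'|]⟩
  obtain ⟨v, u, hvu, hu, hv⟩ := hnear _ s (PathSp.l_mem_fgraph hsI) hsT
  rw [abs_lt] at hu hv
  have hv₂ := etanh_strictMono (hgt u ⟨by linarith [hs.1], by linarith [hs.2]⟩ v hvu)
  exact etanh_strictMono.lt_iff_lt.1 (by linarith)

lemma lo_inter_rbar_eq_empty {π₁n π₂n : ℕ → PathSp} {π₁ π₂ : PathSp}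
    (h1n : ∀ n, IsConn (π₁n n)) (hord : ∀ n, OrdBelow (π₁n n) (π₂n n))
    (hc1 : M1Conv π₁n π₁) (hc2 : M1Conv π₂n π₂) :
    Lo π₁ ∩ Rbar π₂ = ∅ := by
  refine eq_empty_iff_forall_notMem.2 ?_
  rintro ⟨x, t⟩ ⟨⟨ht₁, hx₁⟩, ht₂, hx₂⟩
  obtain ⟨c, hxc, hc⟩ := exists_between hx₁
  obtain ⟨c₂, hcc₂, hc₂⟩ := exists_between hc
  obtain ⟨a, b, ⟨hat, htb⟩, hwin⟩ := mem_nhds_iff_exists_Ioo_subset.1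
    (PathSp.eventually_nhds_mem ht₁ (Ioi_mem_nhds (hc₂.trans_le (min_le_left _ _)))
      (Ioi_mem_nhds (hc₂.trans_le (min_le_right _ _))))
  set η := min (min ((t - a) / 2) ((b - t) / 2)) (etanh c - etanh x)
  have hη : 0 < η :=
    lt_min (lt_min (by linarith) (by linarith)) (sub_pos.2 (etanh_strictMono hxc))
  obtain ⟨n, hπ₁n, xn, tn, hxtn, htn, hxn⟩ :=
    ((hc1.eventually_gt_on_Icc h1n (a' := (a + t) / 2) (b' := (t + b) / 2) (by linarith)
      (by linarith) (by linarith) hcc₂ hwin).and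
      (hc2.eventually_exists_near (v := min (π₂.l t) (π₂.r t))
        ⟨ht₂, le_rfl, min_le_max⟩ hη)).exists
  rw [abs_lt] at htn hxn
  have hxnc : xn < c := by
    have hmx := etanh_strictMono.monotone hx₂
    have hη₃ : η ≤ etanh c - etanh x := min_le_right _ _
    exact etanh_strictMono.lt_iff_lt.1 (by linarith)
  have hηt : η ≤ (t - a) / 2 ∧ η ≤ (b - t) / 2 :=
    ⟨(min_le_left _ _).trans (min_le_left _ _), (min_le_left _ _).trans (min_le_right _ _)⟩
  obtain ⟨π₁', π₂', hbi₁, -, hext₁, hext₂, hle⟩ := hord n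
  have hπ₁' := PathSp.le_of_extends_of_eventually_lt (t := tn) hbi₁ hext₁
    (Filter.mem_of_superset (Icc_mem_nhds (by linarith) (by linarith)) hπ₁n)
  have hcxn : c ≤ xn := (le_min (hπ₁'.1.trans (hle tn).1) (hπ₁'.2.trans (hle tn).2)).trans
    (hext₂ hxtn).2.1
  exact hcxn.not_gt hxnc

namespace PathSp

def neg (π : PathSp) : PathSp where
  I := π.I
  closed_I := π.closed_I
  l t := -π.l t
  r t := -π.r t
  l_default t ht := by rw [π.l_default t ht, neg_zero]
  r_default t ht := by rw [π.r_default t ht, neg_zero]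
  right_cont t ht := (π.right_cont t ht).neg
  left_cont t ht := (π.left_cont t ht).neg
  left_lim t ht := (π.left_lim t ht).neg
  right_lim t ht := (π.right_lim t ht).neg

instance : Neg PathSp := ⟨neg⟩

end PathSp

lemma neg_mem_uIcc_neg {a b v : EReal} : -v ∈ uIcc (-a) (-b) ↔ v ∈ uIcc a b := by
  simp only [mem_uIcc, EReal.neg_le_neg_iff]
  tauto

lemma neg_mem_fgraph_neg {π : PathSp} {v : EReal} {t : ℝ} :
    (-v, t) ∈ fgraph (-π) ↔ (v, t) ∈ fgraph π :=
  and_congr_right' neg_mem_uIcc_neg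

lemma gLt_neg {π : PathSp} {p q : EReal × ℝ} :
    gLt (-π) (-p.1, p.2) (-q.1, q.2) ↔ gLt π p q :=
  or_congr_right (and_congr_right' (and_congr neg_inj.not neg_mem_uIcc_neg))

def negSq : Rsq → Rsq
  | Sum.inl p => Sum.inl (-p.1, p.2)
  | Sum.inr b => Sum.inr b

lemma negSq_negSq (z : Rsq) : negSq (negSq z) = z := by
  rcases z with p | b <;> simp [negSq]

lemma negSq_mem_starSet_fgraph_neg {π : PathSp} {z : Rsq} :
    negSq z ∈ starSet (fgraph (-π)) ↔ z ∈ starSet (fgraph π) := by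
  rcases z with ⟨v, t⟩ | b
  · simpa [negSq, starSet] using neg_mem_fgraph_neg
  · simp [negSq, inr_mem_starSet]

lemma sLt_negSq {π : PathSp} {z z' : Rsq} : sLt (-π) (negSq z) (negSq z') ↔ sLt π z z' := by
  rcases z with p | b <;> rcases z' with q | b' <;> simp only [sLt, negSq]
  exact gLt_neg

lemma dSqz_negSq (z z' : Rsq) : dSqz (negSq z) (negSq z') = dSqz z z' := by
  have hθ : ∀ z, theta (negSq z) = (-(theta z).1, (theta z).2) := by
    rintro (p | b) <;> simp [theta, negSq, etanh_neg, neg_div]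
  simp only [dSqz, hθ]
  ring_nf

lemma dM1_neg_le (π π' : PathSp) : dM1 (-π) (-π') ≤ dM1 π π' := by
  refine csInf_le_csInf ⟨0, by rintro _ ⟨C, -, -, rfl⟩; exact corrSup_nonneg C⟩
    (dM1_set_nonempty π π') ?_
  rintro _ ⟨C, hC, hmono, rfl⟩
  refine ⟨Prod.map negSq negSq '' C, ⟨?_, fun a ha => ?_, fun b hb => ?_⟩, ?_, ?_⟩
  · rintro _ ⟨z, hz, rfl⟩
    exact ⟨negSq_mem_starSet_fgraph_neg.2 (hC.1 hz).1, negSq_mem_starSet_fgraph_neg.2 (hC.1 hz).2⟩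
  · rw [← negSq_negSq a] at ha ⊢
    obtain ⟨b, hb, hab⟩ := hC.2.1 _ (negSq_mem_starSet_fgraph_neg.1 ha)
    exact ⟨negSq b, negSq_mem_starSet_fgraph_neg.2 hb, _, hab, rfl⟩
  · rw [← negSq_negSq b] at hb ⊢
    obtain ⟨a, ha, hab⟩ := hC.2.2 _ (negSq_mem_starSet_fgraph_neg.1 hb)
    exact ⟨negSq a, negSq_mem_starSet_fgraph_neg.2 ha, _, hab, rfl⟩
  · rintro ⟨_, ⟨z, hz, rfl⟩, _, ⟨z', hz', rfl⟩, h₁, h₂⟩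
    exact hmono ⟨z, hz, z', hz', sLt_negSq.1 h₁, sLt_negSq.1 h₂⟩
  · simp only [corrSup, image_image, Prod.map_fst, Prod.map_snd, dSqz_negSq]

lemma M1Conv.neg {πn : ℕ → PathSp} {π : PathSp} (h : M1Conv πn π) :
    M1Conv (fun n => -πn n) (-π) :=
  squeeze_zero (fun _ => dM1_nonneg _ _) (fun _ => dM1_neg_le _ _) h

lemma ExtendsP.neg {π' π : PathSp} (h : ExtendsP π' π) : ExtendsP (-π') (-π) := by
  rintro ⟨v, t⟩ hv
  rw [← neg_neg v] at hv ⊢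
  exact neg_mem_fgraph_neg.2 (h (neg_mem_fgraph_neg.1 hv))

lemma OrdBelow.neg {π₁ π₂ : PathSp} (h : OrdBelow π₁ π₂) : OrdBelow (-π₂) (-π₁) := by
  obtain ⟨π₁', π₂', h₁, h₂, e₁, e₂, hle⟩ := h
  exact ⟨-π₂', -π₁', h₂, h₁, e₂.neg, e₁.neg, fun t =>
    ⟨EReal.neg_le_neg_iff.2 (hle t).1, EReal.neg_le_neg_iff.2 (hle t).2⟩⟩

lemma lbar_inter_ro_eq_empty {π₁n π₂n : ℕ → PathSp} {π₁ π₂ : PathSp}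
    (h2n : ∀ n, IsConn (π₂n n)) (hord : ∀ n, OrdBelow (π₁n n) (π₂n n))
    (hc1 : M1Conv π₁n π₁) (hc2 : M1Conv π₂n π₂) :
    Lbar π₁ ∩ Ro π₂ = ∅ := by
  have hneg := lo_inter_rbar_eq_empty (π₁n := fun n => -π₂n n) (π₂n := fun n => -π₁n n) h2n
    (fun n => (hord n).neg) hc2.neg hc1.neg
  refine eq_empty_iff_forall_notMem.2 ?_
  rintro ⟨x, t⟩ ⟨⟨ht₁, hx₁⟩, ht₂, hx₂⟩
  refine eq_empty_iff_forall_notMem.1 hneg (-x, t) ⟨⟨ht₂, ?_⟩, ht₁, ?_⟩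
  · exact lt_min (EReal.neg_lt_neg_iff.2 ((le_max_left _ _).trans_lt hx₂))
      (EReal.neg_lt_neg_iff.2 ((le_max_right _ _).trans_lt hx₂))
  · rcases le_max_iff.1 hx₁ with h | h
    · exact min_le_of_left_le (EReal.neg_le_neg_iff.2 h)
    · exact min_le_of_right_le (EReal.neg_le_neg_iff.2 h)

theorem limits_of_ordered_paths_general
    (π₁n π₂n : ℕ → PathSp) (π₁ π₂ : PathSp)
    (h1n : ∀ n, IsConn (π₁n n)) (h2n : ∀ n, IsConn (π₂n n))
    (hord : ∀ n, OrdBelow (π₁n n) (π₂n n))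
    (hc1 : M1Conv π₁n π₁) (hc2 : M1Conv π₂n π₂) :
    Lo π₁ ∩ Rbar π₂ = ∅ ∧ Lbar π₁ ∩ Ro π₂ = ∅ :=
  ⟨lo_inter_rbar_eq_empty h1n hord hc1 hc2, lbar_inter_ro_eq_empty h2n hord hc1 hc2⟩

/-- **Lemma (Limits of ordered paths).**
If `π₁ⁿ ◁ π₂ⁿ` for all `n` and `πᵢⁿ → πᵢ` in the M1 topology with `πᵢ ∈ Π^|`, then
`L°(π₁) ∩ R̄(π₂) = ∅` and `L̄(π₁) ∩ R°(π₂) = ∅`. -/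
theorem limits_of_ordered_paths
    (π₁n π₂n : ℕ → PathSp) (π₁ π₂ : PathSp)
    (h1n : ∀ n, IsConn (π₁n n)) (h2n : ∀ n, IsConn (π₂n n))
    (h1 : IsConn π₁) (h2 : IsConn π₂)
    (hord : ∀ n, OrdBelow (π₁n n) (π₂n n))
    (hc1 : M1Conv π₁n π₁) (hc2 : M1Conv π₂n π₂) :
    Lo π₁ ∩ Rbar π₂ = ∅ ∧ Lbar π₁ ∩ Ro π₂ = ∅ :=
  limits_of_ordered_paths_general π₁n π₂n π₁ π₂ h1n h2n hord hc1 hc2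

end PathsPaper
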